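/- Let F be a field of characteristic 0, let J_3 be the 3×3 anti-diagonal identity matrix, let β ∈ F with β ≠ 0, and set A = [[0,1,0],[0,0,1],[β,0,0]], B = [[1,0,0],[1,0,0],[0,1,1]]. If g_1 ∈ Mat_3(F) and a_1, b_1, c_1, d_1 ∈ F satisfy g_1 A + A(J_3 g_1^T J_3) + a_1 A + b_1 B = 0 and g_1 B + B(J_3 g_1^T J_3) + c_1 A + d_1 B = 0, then there exists t ∈ F with g_1 = t·I_3, a_1 = d_1 = -2t, and b_1 = c_1 = 0. -/
import Mathlib


open Matrix

/-- For the specific pair `(A, B)` with `β ≠ 0` arising in the descent from the orbit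
`C₃(a₁)` of `F₄`, the only solutions of the stabilizer equations are the trivial ones:
`g₁ = t·I₃`, `a₁ = d₁ = -2t`, `b₁ = c₁ = 0`. -/
theorem stmt_10 (F : Type*) [Field F] [CharZero F] (β : F) (hβ : β ≠ 0)
    (g₁ : Matrix (Fin 3) (Fin 3) F) (a₁ b₁ c₁ d₁ : F)
    (h1 : g₁ * (!![0,1,0; 0,0,1; β,0,0]) +
        (!![0,1,0; 0,0,1; β,0,0]) *
          ((!![(0:F),0,1; 0,1,0; 1,0,0]) * g₁ᵀ * (!![(0:F),0,1; 0,1,0; 1,0,0])) +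
        a₁ • (!![0,1,0; 0,0,1; β,0,0]) + b₁ • (!![(1:F),0,0; 1,0,0; 0,1,1]) = 0)
    (h2 : g₁ * (!![(1:F),0,0; 1,0,0; 0,1,1]) +
        (!![(1:F),0,0; 1,0,0; 0,1,1]) *
          ((!![(0:F),0,1; 0,1,0; 1,0,0]) * g₁ᵀ * (!![(0:F),0,1; 0,1,0; 1,0,0])) +
        c₁ • (!![0,1,0; 0,0,1; β,0,0]) + d₁ • (!![(1:F),0,0; 1,0,0; 0,1,1]) = 0) :
    ∃ t : F, g₁ = t • 1 ∧ a₁ = -(2*t) ∧ d₁ = -(2*t) ∧ b₁ = 0 ∧ c₁ = 0 := by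
  set p := g₁ 0 0 with hp
  set q := g₁ 0 1 with hq
  set r := g₁ 0 2 with hr
  set s := g₁ 1 0 with hs
  set u := g₁ 1 1 with hu
  set v := g₁ 1 2 with hv
  set w := g₁ 2 0 with hw
  set x := g₁ 2 1 with hx
  set y := g₁ 2 2 with hy
  have hg : g₁ = !![p,q,r; s,u,v; w,x,y] := by
    rw [hp, hq, hr, hs, hu, hv, hw, hx, hy, ← Matrix.eta_fin_three g₁]
  rw [hg] at h1 h2
  have hgt : (!![p,q,r; s,u,v; w,x,y])ᵀ = !![p,s,w; q,u,x; r,v,y] := by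
    ext i j; fin_cases i <;> fin_cases j <;> rfl
  rw [hgt] at h1 h2
  simp only [Matrix.mul_fin_three] at h1 h2
  simp only [← Matrix.ext_iff, Fin.forall_fin_succ, Fin.forall_fin_zero_pi, IsEmpty.forall_iff, Matrix.cons_val_two, Matrix.tail_cons, Matrix.add_apply,
    Matrix.smul_apply, smul_eq_mul, Matrix.of_apply, Matrix.cons_val', Matrix.cons_val_zero,
    Matrix.cons_val_one, Matrix.head_cons, Matrix.empty_val', Matrix.cons_val_fin_one,
    Matrix.head_fin_const, Matrix.zero_apply, Fin.succ_zero_eq_one, Fin.succ_one_eq_two,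
    mul_zero, mul_one, zero_mul, one_mul, zero_add, add_zero, forall_true_iff, true_and,
    and_true] at h1 h2
  obtain ⟨⟨A00, A01, A02⟩, ⟨A10, A11, A12⟩, A20, A21, A22⟩ := h1
  obtain ⟨⟨B00, B01, B02⟩, ⟨B10, B11, B12⟩, B20, B21, B22⟩ := h2
  have hq0 : q = 0 := by linear_combination A02/2
  have hr0 : r = 0 := by linear_combination B02/2
  have hs0 : s = 0 := by linear_combination A11/2
  have hv0 : v = 0 := by linear_combination B11/2
  have hc0 : c₁ = 0 := by linear_combination B12 - hv0 - hr0
  have hb0 : b₁ = 0 := by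
    linear_combination A10/2 + A22/2 - B20/4 - (β/2)*hv0 - (β/2)*hr0 + (β/4)*hc0
  have hw0 : w = 0 := by linear_combination A10 - β*hv0 - hb0
  have hx0 : x = 0 := by linear_combination A22 - β*hr0 - hb0
  have hay : a₁ = -(2*y) := by
    have hprod : β * (2*y + a₁) = 0 := by linear_combination A20
    rcases mul_eq_zero.mp hprod with h | h
    · exact absurd h hβ
    · linear_combination h
  have hpy : p = y := by
    linear_combination B00/2 - B21/2 + A01/2 - hay/2 - hq0/2 + hs0/2
  have huy : u = y := by linear_combination A01 - hpy - hay
  refine ⟨y, ?_, hay, ?_, hb0, hc0⟩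
  · rw [hg, hq0, hr0, hs0, hv0, hw0, hx0, hpy, huy]
    ext i j
    fin_cases i <;> fin_cases j <;> simp [Matrix.one_apply, Matrix.vecHead, Matrix.vecTail]
  · linear_combination B00 - hpy - hq0
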